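/- arXiv:1811.09893 — 3 statements merged into one kernel-verified Lean document; each statement's English description precedes it below -/
import Mathlib

section
/- There exist a complex Hilbert space H, a densely defined closed unbounded operator B on H, and a positive self-adjoint operator P on H with P ∘ P = B* ∘ B (i.e., P is the absolute value |B| of B), such that: the composition B ∘ B is bounded on its (dense) domain, the composition P ∘ B is bounded on its (dense) domain, while the composition B ∘ P is unbounded and closed. -/
/- Unbounded (partially defined) operators on a complex Hilbert space are modelled by
Mathlib's `LinearPMap` (`H →ₗ.[ℂ] H`).  `T†` is the adjoint, `T.IsClosed` means the graph
of `T` is closed, and `f - g` is the difference with domain `D(f) ⊓ D(g)`. -/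

noncomputable section

open LinearPMap

/-- The composition `S ∘ T` of two partially defined linear operators, with its natural
(maximal) domain `{x ∈ D(T) : T x ∈ D(S)}`, acting by `x ↦ S (T x)`. -/
def pComp {R E F G : Type*} [Ring R] [AddCommGroup E] [Module R E]
    [AddCommGroup F] [Module R F] [AddCommGroup G] [Module R G]
    (S : F →ₗ.[R] G) (T : E →ₗ.[R] F) : E →ₗ.[R] G where
  domain := (S.domain.comap T.toFun).map T.domain.subtype
  toFun := (S.toFun.comp (T.toFun.restrict (q := S.domain) fun _ hx => hx)).comp
    (Submodule.equivMapOfInjective T.domain.subtype T.domain.injective_subtype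
      (S.domain.comap T.toFun)).symm.toLinearMap

/-- A partially defined operator is bounded if `‖T x‖ ≤ C‖x‖` on its domain for some `C ≥ 0`. -/
def IsBddOp {H : Type*} [NormedAddCommGroup H] [InnerProductSpace ℂ H]
    (T : H →ₗ.[ℂ] H) : Prop :=
  ∃ C : ℝ, 0 ≤ C ∧ ∀ x : T.domain, ‖T x‖ ≤ C * ‖(x : H)‖

/-- A partially defined operator is positive if `⟪T x, x⟫` is real and nonnegative
for every `x` in its domain. -/
def IsPosOp {H : Type*} [NormedAddCommGroup H] [InnerProductSpace ℂ H]
    (T : H →ₗ.[ℂ] H) : Prop :=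
  ∀ x : T.domain, 0 ≤ (inner ℂ (T x) ((x : H)) : ℂ).re ∧ (inner ℂ (T x) ((x : H)) : ℂ).im = 0

/-- A (bundled) complex Hilbert space. -/
structure HilbertC where
  carrier : Type
  [normed : NormedAddCommGroup carrier]
  [ips : InnerProductSpace ℂ carrier]
  [complete : CompleteSpace carrier]

attribute [instance] HilbertC.normed HilbertC.ips HilbertC.complete

/-- The product Hilbert space `H × H` (with inner product
`⟪(x₁,y₁),(x₂,y₂)⟫ = ⟪x₁,x₂⟫ + ⟪y₁,y₂⟫`), i.e. the `L²`-product `WithLp 2 (H × H)`. -/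
abbrev HxH (H : Type) [NormedAddCommGroup H] [InnerProductSpace ℂ H] : Type :=
  WithLp 2 (H × H)

/-- The canonical linear identification of the product Hilbert space `HxH H` with `H × H`. -/
abbrev prodE (H : Type) [NormedAddCommGroup H] [InnerProductSpace ℂ H] :
    HxH H ≃ₗ[ℂ] H × H := WithLp.linearEquiv 2 ℂ (H × H)

/-!
On `ℓ²(ℕ)` put `w k = k` for odd `k` and `w k = 0` for even `k`, and let `B` be the weighted
backward shift `(B x) k = w (k + 1) x (k + 1)`: it sends `e (2n+1)` to `(2n+1) e (2n)` and kills
`e (2n)`. Its adjoint is the forward shift `(B† x) k = w k x (k - 1)`, so `B† B` is multiplication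
by `w²` and `|B|` is multiplication by `w`. Since `w k w (k + 1) = 0`, both `B ∘ B` and `|B| ∘ B`
vanish on the domain of `B`, whereas `B ∘ |B|` is the weighted shift with the unbounded weights
`w (k + 1)²`. All these operators are weighted composition operators `x ↦ d · (x ∘ σ)` with
maximal domain, which are closed, and whose adjoints and products are again of this form.
-/

open scoped lp ComplexConjugate ComplexOrder

section pComp

variable {R E F G : Type*} [Ring R] [AddCommGroup E] [Module R E] [AddCommGroup F] [Module R F]
  [AddCommGroup G] [Module R G] {S : F →ₗ.[R] G} {T : E →ₗ.[R] F}

theorem mem_domain_pComp {x : E} :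
    x ∈ (pComp S T).domain ↔ ∃ hx : x ∈ T.domain, T ⟨x, hx⟩ ∈ S.domain :=
  ⟨fun ⟨v, hv, hvx⟩ => hvx ▸ ⟨v.2, hv⟩, fun ⟨hx, hTx⟩ => ⟨⟨x, hx⟩, hTx, rfl⟩⟩

theorem pComp_apply (x : (pComp S T).domain) :
    pComp S T x = S ⟨T ⟨x, (mem_domain_pComp.mp x.2).1⟩, (mem_domain_pComp.mp x.2).2⟩ := by
  obtain ⟨x, hx⟩ := x
  have hx' := mem_domain_pComp.mp hx
  have key : (Submodule.equivMapOfInjective T.domain.subtype T.domain.injective_subtype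
      (S.domain.comap T.toFun)).symm ⟨x, hx⟩ = ⟨⟨x, hx'.1⟩, hx'.2⟩ := by
    rw [LinearEquiv.symm_apply_eq]
    rfl
  exact congrArg (fun v => S.toFun (T.toFun.restrict (q := S.domain) (fun _ h => h) v)) key

end pComp

variable {ι : Type*}

theorem dense_of_forall_single_mem [DecidableEq ι] {S : Submodule ℂ ℓ²(ι, ℂ)}
    (h : ∀ i a, lp.single 2 i a ∈ S) : Dense (S : Set ℓ²(ι, ℂ)) := fun x =>
  mem_closure_of_tendsto (lp.hasSum_single ENNReal.ofNat_ne_top x) <|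
    .of_forall fun _ => S.sum_mem fun i _ => h i _

def weightedCompOp (d : ι → ℂ) (σ : ι → ι) : ℓ²(ι, ℂ) →ₗ.[ℂ] ℓ²(ι, ℂ) where
  domain :=
    { carrier := {x | Memℓp (fun k => d k * x (σ k)) 2}
      add_mem' {x y} hx hy := by simpa [mul_add, Pi.add_def] using hx.add hy
      zero_mem' := by simpa [Pi.zero_def] using (zero_memℓp : Memℓp (0 : ι → ℂ) 2)
      smul_mem' a x hx := by simpa [mul_left_comm, Pi.smul_def] using hx.const_smul a }
  toFun :=
    { toFun x := ⟨fun k => d k * (x : ℓ²(ι, ℂ)) (σ k), x.2⟩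
      map_add' x y := lp.ext <| funext fun k => by simp [mul_add]; rfl
      map_smul' a x := lp.ext <| funext fun k => by simp [mul_left_comm] }

section weightedCompOp

variable {d e : ι → ℂ} {σ τ : ι → ι}

theorem mem_domain_weightedCompOp {x : ℓ²(ι, ℂ)} :
    x ∈ (weightedCompOp d σ).domain ↔ Memℓp (fun k => d k * x (σ k)) 2 := Iff.rfl

@[simp] theorem weightedCompOp_apply (x : (weightedCompOp d σ).domain) (k : ι) :
    weightedCompOp d σ x k = d k * (x : ℓ²(ι, ℂ)) (σ k) := rfl

theorem graph_weightedCompOp :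
    ((weightedCompOp d σ).graph : Set (ℓ²(ι, ℂ) × ℓ²(ι, ℂ))) =
      {z | ∀ k, z.2 k = d k * z.1 (σ k)} := by
  ext ⟨x, y⟩
  simp only [SetLike.mem_coe, LinearPMap.mem_graph_iff, Set.mem_ofPred_eq]
  constructor
  · rintro ⟨v, rfl, rfl⟩ k
    rfl
  · intro h
    have hx : x ∈ (weightedCompOp d σ).domain := by
      rw [mem_domain_weightedCompOp, ← funext h]
      exact y.2
    exact ⟨⟨x, hx⟩, rfl, lp.ext (funext h).symm⟩

theorem isClosed_weightedCompOp : (weightedCompOp d σ).IsClosed := by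
  rw [LinearPMap.IsClosed, graph_weightedCompOp, Set.ofPred_forall]
  have eval (i : ι) := (lp.evalCLM ℂ (fun _ : ι => ℂ) 2 i).continuous
  exact isClosed_iInter fun k => isClosed_eq ((eval k).comp continuous_snd)
    (continuous_const.mul ((eval (σ k)).comp continuous_fst))

theorem single_mem_domain_weightedCompOp [DecidableEq ι] (hσ : ∀ i, (σ ⁻¹' {i}).Finite)
    (i : ι) (a : ℂ) : lp.single 2 i a ∈ (weightedCompOp d σ).domain := by
  refine (memℓp_zero ((hσ i).subset fun k hk => ?_)).of_exponent_ge (by norm_num)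
  by_contra hki
  exact hk (by simp [show σ k ≠ i from hki])

theorem dense_domain_weightedCompOp (hσ : ∀ i, (σ ⁻¹' {i}).Finite) :
    Dense ((weightedCompOp d σ).domain : Set ℓ²(ι, ℂ)) := by
  classical
  exact dense_of_forall_single_mem (single_mem_domain_weightedCompOp hσ)

theorem not_isBddOp_weightedCompOp (hσ : ∀ i, (σ ⁻¹' {i}).Finite)
    (hd : ¬ BddAbove (Set.range fun k => ‖d k‖)) : ¬ IsBddOp (weightedCompOp d σ) := by
  classical
  rintro ⟨C, -, hC⟩
  refine hd ⟨C, ?_⟩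
  rintro _ ⟨k, rfl⟩
  let x : (weightedCompOp d σ).domain :=
    ⟨lp.single 2 (σ k) 1, single_mem_domain_weightedCompOp hσ _ _⟩
  calc ‖d k‖ = ‖weightedCompOp d σ x k‖ := by simp [x]
    _ ≤ ‖weightedCompOp d σ x‖ := lp.norm_apply_le_norm two_ne_zero _ k
    _ ≤ C := by simpa [x, lp.norm_single] using hC x

theorem isPosOp_weightedCompOp_id (hd : ∀ k, 0 ≤ d k) : IsPosOp (weightedCompOp d id) := by
  intro x
  suffices 0 ≤ inner ℂ (weightedCompOp d id x) (x : ℓ²(ι, ℂ)) from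
    ⟨(Complex.nonneg_iff.mp this).1, (Complex.nonneg_iff.mp this).2.symm⟩
  rw [lp.inner_eq_tsum]
  refine tsum_nonneg fun k => ?_
  have : conj (d k) = d k := Complex.conj_eq_iff_im.mpr (Complex.nonneg_iff.mp (hd k)).2.symm
  rw [weightedCompOp_apply, RCLike.inner_apply, map_mul, this, mul_left_comm]
  exact mul_nonneg (hd k) (mul_star_self_nonneg _)

theorem mem_domain_pComp_weightedCompOp {x : ℓ²(ι, ℂ)} :
    x ∈ (pComp (weightedCompOp d σ) (weightedCompOp e τ)).domain ↔
      x ∈ (weightedCompOp e τ).domain ∧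
        x ∈ (weightedCompOp (fun k => d k * e (σ k)) (τ ∘ σ)).domain := by
  rw [mem_domain_pComp]
  simp only [mem_domain_weightedCompOp, weightedCompOp_apply, Function.comp_apply, mul_assoc,
    exists_prop]

theorem pComp_weightedCompOp_apply
    (x : (pComp (weightedCompOp d σ) (weightedCompOp e τ)).domain) (k : ι) :
    pComp (weightedCompOp d σ) (weightedCompOp e τ) x k =
      d k * e (σ k) * (x : ℓ²(ι, ℂ)) (τ (σ k)) := by
  rw [pComp_apply, weightedCompOp_apply, weightedCompOp_apply, mul_assoc]

theorem pComp_weightedCompOp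
    (h : (weightedCompOp (fun k => d k * e (σ k)) (τ ∘ σ)).domain ≤
      (weightedCompOp e τ).domain) :
    pComp (weightedCompOp d σ) (weightedCompOp e τ) =
      weightedCompOp (fun k => d k * e (σ k)) (τ ∘ σ) := by
  refine LinearPMap.ext ?_ fun x _ _ => lp.ext <| funext fun k => ?_
  · ext x
    rw [mem_domain_pComp_weightedCompOp, and_iff_right_of_imp (@h x)]
  · rw [pComp_weightedCompOp_apply, weightedCompOp_apply]
    rfl

theorem domain_pComp_weightedCompOp_of_mul_eq_zero (h : ∀ k, d k * e (σ k) = 0) :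
    (pComp (weightedCompOp d σ) (weightedCompOp e τ)).domain = (weightedCompOp e τ).domain := by
  have : Memℓp (fun _ : ι => (0 : ℂ)) 2 := zero_memℓp
  ext x
  simp [mem_domain_pComp_weightedCompOp, mem_domain_weightedCompOp, h, this]

theorem isBddOp_pComp_weightedCompOp_of_mul_eq_zero (h : ∀ k, d k * e (σ k) = 0) :
    IsBddOp (pComp (weightedCompOp d σ) (weightedCompOp e τ)) := by
  refine ⟨0, le_rfl, fun x => ?_⟩
  have : pComp (weightedCompOp d σ) (weightedCompOp e τ) x = 0 :=
    lp.ext <| funext fun k => by simp [pComp_weightedCompOp_apply, h]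
  simp [this]

theorem domain_weightedCompOp_le_of_norm_le (h : ∀ k, ‖e k‖ ≤ ‖d k‖) :
    (weightedCompOp d σ).domain ≤ (weightedCompOp e σ).domain := fun x hx =>
  Memℓp.mono' hx fun k => by
    simpa only [norm_mul] using mul_le_mul_of_nonneg_right (h k) (norm_nonneg _)

theorem domain_weightedCompOp_comp (hσ : σ.Injective) (hd : ∀ j ∉ Set.range σ, d j = 0) :
    (weightedCompOp (fun k => d (σ k)) σ).domain = (weightedCompOp d id).domain := by
  ext x
  simp only [mem_domain_weightedCompOp, memℓp_gen_iff (p := 2) (by norm_num), id]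
  exact hσ.summable_iff (f := fun j => ‖d j * x j‖ ^ (2 : ENNReal).toReal) fun j hj => by
    simp [hd j hj]

theorem weightedCompOp_congr {d' : ι → ℂ} {σ' : ι → ι} (hd : ∀ k, d k = d' k)
    (hσ : ∀ k, d k ≠ 0 → σ k = σ' k) : weightedCompOp d σ = weightedCompOp d' σ' := by
  have hf (x : ℓ²(ι, ℂ)) : (fun k => d k * x (σ k)) = fun k => d' k * x (σ' k) := by
    funext k
    by_cases hk : d k = 0
    · simp [← hd k, hk]
    · rw [← hd k, hσ k hk]
  refine LinearPMap.ext ?_ fun x _ _ => lp.ext (hf x)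
  ext x
  exact (congrArg (Memℓp · 2) (hf x)).to_iff

end weightedCompOp

section adjoint

variable {d d' : ι → ℂ} {σ τ : ι → ι}

theorem isFormalAdjoint_weightedCompOp
    (hd : ∀ k, d k ≠ 0 → τ (σ k) = k ∧ d' (σ k) = conj (d k))
    (hd' : ∀ j, d' j ≠ 0 → σ (τ j) = j ∧ d (τ j) = conj (d' j)) :
    (weightedCompOp d σ).IsFormalAdjoint (weightedCompOp d' τ) := by
  intro x y
  simp only [lp.inner_eq_tsum, weightedCompOp_apply, RCLike.inner_apply]
  symm
  refine tsum_eq_tsum_of_ne_zero_bij (fun k => σ k) ?_ ?_ ?_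
  · rintro ⟨k₁, hk₁⟩ ⟨k₂, hk₂⟩ (h : σ k₁ = σ k₂)
    have h₁ : d k₁ ≠ 0 := fun h0 => hk₁ (by simp [h0])
    have h₂ : d k₂ ≠ 0 := fun h0 => hk₂ (by simp [h0])
    exact Subtype.ext ((hd k₁ h₁).1.symm.trans (h ▸ (hd k₂ h₂).1))
  · intro j hj
    have hj' : d' j ≠ 0 := fun h0 => hj (by simp [h0])
    obtain ⟨hστ, hdτ⟩ := hd' j hj'
    refine ⟨⟨τ j, ?_⟩, hστ⟩
    simp_all [Function.mem_support]
  · rintro ⟨k, hk⟩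
    have hk' : d k ≠ 0 := fun h0 => hk (by simp [h0])
    obtain ⟨hτσ, hdσ⟩ := hd k hk'
    simp [hτσ, hdσ]
    ring

theorem adjoint_weightedCompOp (hσ : ∀ i, (σ ⁻¹' {i}).Finite)
    (hd : ∀ k, d k ≠ 0 → τ (σ k) = k ∧ d' (σ k) = conj (d k))
    (hd' : ∀ j, d' j ≠ 0 → σ (τ j) = j ∧ d (τ j) = conj (d' j)) :
    (weightedCompOp d σ)† = weightedCompOp d' τ := by
  classical
  have hT := dense_domain_weightedCompOp (d := d) hσ
  have hsingle (j : ι) :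
      weightedCompOp d σ ⟨lp.single 2 j 1, single_mem_domain_weightedCompOp hσ j 1⟩ =
        lp.single 2 (τ j) (conj (d' j)) := by
    refine lp.ext <| funext fun k => ?_
    simp only [weightedCompOp_apply, lp.single_apply, Pi.single_apply]
    by_cases hj : d' j = 0
    · rw [hj, _root_.map_zero, ite_self, mul_ite, mul_one, mul_zero]
      split_ifs with hk
      · by_contra hdk
        have := (hd k hdk).2
        rw [hk, hj] at this
        exact hdk (by simpa using this.symm)
      · rfl
    · obtain ⟨hστ, hdτ⟩ := hd' j hj
      by_cases hk : k = τ j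
      · simp [hk, hστ, hdτ]
      · simp only [hk, if_false, mul_ite, mul_one, mul_zero]
        split_ifs with hσk
        · by_contra hdk
          exact hk ((hd k hdk).1 ▸ hσk ▸ rfl)
        · rfl
  have hadj (y : (weightedCompOp d σ)†.domain) (j : ι) :
      (weightedCompOp d σ)† y j = d' j * (y : ℓ²(ι, ℂ)) (τ j) := by
    have := LinearPMap.adjoint_isFormalAdjoint hT y ⟨_, single_mem_domain_weightedCompOp hσ j 1⟩
    rw [hsingle, lp.inner_single_right, lp.inner_single_right] at this
    simpa [RCLike.inner_apply, mul_comm] using congrArg conj this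
  refine le_antisymm (LinearPMap.le_of_eqLocus_ge fun y hy => ?_)
    ((isFormalAdjoint_weightedCompOp hd hd').le_adjoint hT)
  have hy' : y ∈ (weightedCompOp d' τ).domain := by
    rw [mem_domain_weightedCompOp, ← funext (hadj ⟨y, hy⟩)]
    exact lp.memℓp _
  exact ⟨hy, hy', lp.ext <| funext fun j => hadj ⟨y, hy⟩ j⟩

end adjoint

namespace AbsoluteValueExample

def weight (k : ℕ) : ℂ := if Even k then 0 else k

theorem weight_nonneg (k : ℕ) : 0 ≤ weight k := by
  unfold weight
  split_ifs <;> simp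

theorem conj_weight (k : ℕ) : conj (weight k) = weight k := by
  unfold weight
  split_ifs <;> simp

theorem weight_zero : weight 0 = 0 := by simp [weight]

theorem weight_mul_weight_succ (k : ℕ) : weight k * weight (k + 1) = 0 := by
  unfold weight
  rcases Nat.even_or_odd k with h | h <;> simp [h, Nat.even_add_one]

theorem norm_weight_le_norm_weight_mul_self (k : ℕ) : ‖weight k‖ ≤ ‖weight k * weight k‖ := by
  unfold weight
  split_ifs with h
  · simp
  · have : (1 : ℝ) ≤ k := by exact_mod_cast Nat.one_le_iff_ne_zero.mpr (by rintro rfl; simp at h)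
    simp only [norm_mul, Complex.norm_natCast]
    nlinarith

theorem norm_weight_odd (n : ℕ) : ‖weight (2 * n + 1)‖ = 2 * n + 1 := by
  simp [weight]
  exact_mod_cast Complex.norm_natCast (2 * n + 1)

theorem not_bddAbove_norm_weight_succ : ¬ BddAbove (Set.range fun k => ‖weight (k + 1)‖) := by
  rintro ⟨C, hC⟩
  obtain ⟨n, hn⟩ := exists_nat_gt C
  have : ‖weight (2 * n + 1)‖ ≤ C := hC ⟨2 * n, rfl⟩
  rw [norm_weight_odd] at this
  linarith

theorem not_bddAbove_norm_weight_succ_mul_self :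
    ¬ BddAbove (Set.range fun k => ‖weight (k + 1) * weight (k + 1)‖) := fun h =>
  not_bddAbove_norm_weight_succ (h.range_mono _ fun _ => norm_weight_le_norm_weight_mul_self _)

def B : ℓ²(ℕ, ℂ) →ₗ.[ℂ] ℓ²(ℕ, ℂ) := weightedCompOp (fun k => weight (k + 1)) (· + 1)

def P : ℓ²(ℕ, ℂ) →ₗ.[ℂ] ℓ²(ℕ, ℂ) := weightedCompOp weight id

theorem finite_preimage_add_one (i : ℕ) : ((· + 1) ⁻¹' {i} : Set ℕ).Finite :=
  (Set.finite_singleton i).preimage (add_left_injective 1).injOn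

theorem domain_weightedCompOp_succ {d : ℕ → ℂ} (hd : d 0 = 0) :
    (weightedCompOp (fun k => d (k + 1)) (· + 1)).domain = (weightedCompOp d id).domain :=
  domain_weightedCompOp_comp (add_left_injective 1) fun j hj => by
    cases j with
    | zero => exact hd
    | succ j => exact absurd ⟨j, rfl⟩ hj

theorem dense_domain_B : Dense (B.domain : Set ℓ²(ℕ, ℂ)) :=
  dense_domain_weightedCompOp finite_preimage_add_one

theorem adjoint_P : P† = P :=
  adjoint_weightedCompOp Set.finite_singleton (fun k _ => ⟨rfl, (conj_weight k).symm⟩)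
    fun j _ => ⟨rfl, (conj_weight j).symm⟩

theorem adjoint_B : B† = weightedCompOp weight (· - 1) := by
  refine adjoint_weightedCompOp finite_preimage_add_one (fun k _ => ⟨rfl, (conj_weight _).symm⟩)
    fun j hj => ?_
  obtain ⟨j, rfl⟩ : ∃ i, j = i + 1 := Nat.exists_eq_add_one.mpr <| Nat.pos_of_ne_zero <| by
    rintro rfl
    exact hj weight_zero
  exact ⟨rfl, (conj_weight _).symm⟩

theorem domain_weightedCompOp_weight_mul_self_le :
    (weightedCompOp (fun k => weight k * weight k) id).domain ≤ P.domain :=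
  domain_weightedCompOp_le_of_norm_le norm_weight_le_norm_weight_mul_self

theorem pComp_P_P : pComp P P = weightedCompOp (fun k => weight k * weight k) id :=
  pComp_weightedCompOp domain_weightedCompOp_weight_mul_self_le

theorem pComp_adjoint_B_B : pComp B† B = weightedCompOp (fun k => weight k * weight k) id := by
  have hcongr : weightedCompOp (fun k => weight k * weight (k - 1 + 1)) ((· + 1) ∘ (· - 1)) =
      weightedCompOp (fun k => weight k * weight k) id := by
    refine weightedCompOp_congr (fun k => ?_) fun k hk => ?_
    · cases k <;> simp [weight_zero]
    · cases k
      · simp [weight_zero] at hk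
      · rfl
  rw [adjoint_B, B, pComp_weightedCompOp, hcongr]
  rw [hcongr, domain_weightedCompOp_succ weight_zero]
  exact domain_weightedCompOp_weight_mul_self_le

theorem domain_pComp_B_B : (pComp B B).domain = B.domain :=
  domain_pComp_weightedCompOp_of_mul_eq_zero fun k => weight_mul_weight_succ (k + 1)

theorem isBddOp_pComp_B_B : IsBddOp (pComp B B) :=
  isBddOp_pComp_weightedCompOp_of_mul_eq_zero fun k => weight_mul_weight_succ (k + 1)

theorem domain_pComp_P_B : (pComp P B).domain = B.domain :=
  domain_pComp_weightedCompOp_of_mul_eq_zero weight_mul_weight_succ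

theorem isBddOp_pComp_P_B : IsBddOp (pComp P B) :=
  isBddOp_pComp_weightedCompOp_of_mul_eq_zero weight_mul_weight_succ

theorem pComp_B_P :
    pComp B P = weightedCompOp (fun k => weight (k + 1) * weight (k + 1)) (· + 1) := by
  refine pComp_weightedCompOp ?_
  refine (domain_weightedCompOp_succ (d := fun k => weight k * weight k) ?_).trans_le ?_
  · simp [weight_zero]
  · exact domain_weightedCompOp_weight_mul_self_le

end AbsoluteValueExample

open AbsoluteValueExample in
/-- There exist a complex Hilbert space `H`, a densely defined closed unbounded operator `B`,
and a positive self-adjoint `P` with `P ∘ P = B† ∘ B` (i.e. `P = |B|`), such that `B ∘ B` is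
bounded on its dense domain, `P ∘ B` is bounded on its dense domain, while `B ∘ P` is
unbounded and closed. -/
theorem stmt_0 :
    ∃ (𝓗 : HilbertC) (B P : 𝓗.carrier →ₗ.[ℂ] 𝓗.carrier),
      Dense (B.domain : Set 𝓗.carrier) ∧ B.IsClosed ∧ ¬ IsBddOp B ∧
      IsPosOp P ∧ P† = P ∧ pComp P P = pComp (B†) B ∧
      Dense ((pComp B B).domain : Set 𝓗.carrier) ∧ IsBddOp (pComp B B) ∧
      Dense ((pComp P B).domain : Set 𝓗.carrier) ∧ IsBddOp (pComp P B) ∧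
      ¬ IsBddOp (pComp B P) ∧ (pComp B P).IsClosed := by
  refine ⟨⟨ℓ²(ℕ, ℂ)⟩, B, P, dense_domain_B, isClosed_weightedCompOp,
    not_isBddOp_weightedCompOp finite_preimage_add_one not_bddAbove_norm_weight_succ,
    isPosOp_weightedCompOp_id weight_nonneg, adjoint_P, pComp_P_P.trans pComp_adjoint_B_B.symm,
    domain_pComp_B_B ▸ dense_domain_B, isBddOp_pComp_B_B,
    domain_pComp_P_B ▸ dense_domain_B, isBddOp_pComp_P_B, ?_, ?_⟩
  · rw [pComp_B_P]
    exact not_isBddOp_weightedCompOp finite_preimage_add_one not_bddAbove_norm_weight_succ_mul_self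
  · rw [pComp_B_P]
    exact isClosed_weightedCompOp
end
end

section
/- Let A and B be self-adjoint operators on a complex Hilbert space H with D(A) ∩ D(B) = {0}. Then the operator T on H × H with domain D(B) × D(A) given by T(x, y) = (Ay, Bx) is densely defined and closed, and D(T ∘ T*) ∩ D(T* ∘ T) = {0}; hence the self-commutator T ∘ T* − T* ∘ T has domain {0}. -/
/- Unbounded (partially defined) operators on a complex Hilbert space are modelled by
Mathlib's `LinearPMap` (`H →ₗ.[ℂ] H`).  `T†` is the adjoint, `T.IsClosed` means the graph
of `T` is closed, and `f - g` is the difference with domain `D(f) ⊓ D(g)`. -/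

noncomputable section

open LinearPMap

/-!
`LinearPMap.antidiag A B` is the block operator `[[0, A], [B, 0]]` on `D(B) × D(A)`.
Since `A` and `B` are closed, its graph is, up to a permutation of coordinates, the product
of the graphs of `A` and `B`, hence closed. Testing the adjoint `T†` against the vectors
`(0, y)` and `(x, 0)` of `D(T)` gives `D(T†) ⊆ D(A†) × D(B†) = D(A) × D(B)`. As
`D(T ∘ T†) ⊆ D(T†)` and `D(T† ∘ T) ⊆ D(T)`, both lie in `(D(A) ∩ D(B)) × (D(A) ∩ D(B)) = {0}`.
-/

open WithLp

theorem pComp_domain_le {R E F G : Type*} [Ring R] [AddCommGroup E] [Module R E]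
    [AddCommGroup F] [Module R F] [AddCommGroup G] [Module R G]
    (S : F →ₗ.[R] G) (T : E →ₗ.[R] F) : (pComp S T).domain ≤ T.domain :=
  Submodule.map_subtype_le _ _

namespace LinearPMap

section Module

variable {R E F : Type*} [Ring R] [AddCommGroup E] [Module R E] [AddCommGroup F] [Module R F]

def antidiag (A : F →ₗ.[R] E) (B : E →ₗ.[R] F) :
    WithLp 2 (E × F) →ₗ.[R] WithLp 2 (E × F) where
  domain := (B.domain.prod A.domain).comap (WithLp.linearEquiv 2 R (E × F)).toLinearMap
  toFun :=
    { toFun := fun x => toLp 2 (A ⟨(ofLp x.1).2, x.2.2⟩, B ⟨(ofLp x.1).1, x.2.1⟩)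
      map_add' := fun x y => by
        simp only [← toLp_add, Prod.mk_add_mk, ← LinearPMap.map_add]
        rfl
      map_smul' := fun c x => by
        simp only [← toLp_smul, Prod.smul_mk, ← LinearPMap.map_smul]
        rfl }

variable {A : F →ₗ.[R] E} {B : E →ₗ.[R] F}

@[simp]
theorem antidiag_apply (z : (antidiag A B).domain) :
    antidiag A B z = toLp 2 (A ⟨(ofLp (z : WithLp 2 (E × F))).2, z.2.2⟩,
      B ⟨(ofLp (z : WithLp 2 (E × F))).1, z.2.1⟩) :=
  rfl

theorem eq_antidiag {T : WithLp 2 (E × F) →ₗ.[R] WithLp 2 (E × F)}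
    (hdom : T.domain = (B.domain.prod A.domain).comap (WithLp.linearEquiv 2 R (E × F)).toLinearMap)
    (happly : ∀ x : T.domain, ∀ (hx : (ofLp (x : WithLp 2 (E × F))).1 ∈ B.domain)
      (hy : (ofLp (x : WithLp 2 (E × F))).2 ∈ A.domain),
      WithLp.linearEquiv 2 R (E × F) (T x) = (A ⟨_, hy⟩, B ⟨_, hx⟩)) :
    T = antidiag A B :=
  LinearPMap.ext hdom fun x hx hy => (WithLp.linearEquiv 2 R (E × F)).injective <|
    happly ⟨x, hx⟩ hy.1 hy.2

theorem antidiag_domain_inf_eq_bot {A B : E →ₗ.[R] E} (hAB : A.domain ⊓ B.domain = ⊥) :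
    (antidiag A B).domain ⊓ (antidiag B A).domain = ⊥ := by
  refine eq_bot_iff.2 fun z ⟨⟨hzB, hzA⟩, ⟨hzA', hzB'⟩⟩ => ?_
  have h1 : (ofLp z).1 ∈ A.domain ⊓ B.domain := ⟨hzA', hzB⟩
  have h2 : (ofLp z).2 ∈ A.domain ⊓ B.domain := ⟨hzA, hzB'⟩
  rw [hAB, Submodule.mem_bot] at h1 h2
  exact (Submodule.mem_bot R).2 (WithLp.ofLp_injective 2 (Prod.ext h1 h2))

theorem antidiag_graph :
    ((antidiag A B).graph : Set (WithLp 2 (E × F) × WithLp 2 (E × F))) =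
      (fun p => (((ofLp p.1).2, (ofLp p.2).1), ((ofLp p.1).1, (ofLp p.2).2))) ⁻¹'
        ((A.graph : Set (F × E)) ×ˢ (B.graph : Set (E × F))) := by
  ext ⟨p, q⟩
  simp only [SetLike.mem_coe, mem_graph_iff, Set.mem_preimage, Set.mem_prod]
  constructor
  · rintro ⟨⟨x, hxB, hxA⟩, rfl, rfl⟩
    exact ⟨⟨⟨_, hxA⟩, rfl, rfl⟩, ⟨_, hxB⟩, rfl, rfl⟩
  · rintro ⟨⟨⟨y, hyA⟩, rfl, hAy⟩, ⟨x, hxB⟩, rfl, hBx⟩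
    exact ⟨⟨p, hxB, hyA⟩, rfl, WithLp.ofLp_injective 2 (Prod.ext hAy hBx)⟩

theorem dense_antidiag_domain [TopologicalSpace E] [TopologicalSpace F]
    (hA : Dense (A.domain : Set F)) (hB : Dense (B.domain : Set E)) :
    Dense ((antidiag A B).domain : Set (WithLp 2 (E × F))) :=
  (hB.prod hA).preimage (WithLp.homeomorphProd 2 E F).isOpenMap

end Module

section Closed

variable {R E F : Type*} [CommRing R] [AddCommGroup E] [Module R E] [AddCommGroup F] [Module R F]
  [TopologicalSpace E] [TopologicalSpace F] {A : F →ₗ.[R] E} {B : E →ₗ.[R] F}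

theorem antidiag_isClosed (hA : A.IsClosed) (hB : B.IsClosed) : (antidiag A B).IsClosed := by
  rw [LinearPMap.IsClosed, antidiag_graph]
  exact (hA.prod hB).preimage (by fun_prop)

end Closed

section InnerProduct

variable {𝕜 E F : Type*} [RCLike 𝕜] [NormedAddCommGroup E] [InnerProductSpace 𝕜 E]
  [NormedAddCommGroup F] [InnerProductSpace 𝕜 F] [CompleteSpace E] [CompleteSpace F]
  {A : F →ₗ.[𝕜] E} {B : E →ₗ.[𝕜] F}

theorem adjoint_antidiag_domain_le (hA : Dense (A.domain : Set F))
    (hB : Dense (B.domain : Set E)) :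
    (antidiag A B)†.domain ≤ (antidiag (B†) (A†)).domain := by
  intro z hz
  have hT := (antidiag A B).adjoint_isFormalAdjoint (dense_antidiag_domain hA hB) ⟨z, hz⟩
  constructor
  · refine mem_adjoint_domain_of_exists _
      ⟨(ofLp ((antidiag A B)† ⟨z, hz⟩)).2, fun y => ?_⟩
    have hB0 : B ⟨0, B.domain.zero_mem⟩ = 0 := B.map_zero
    simpa [hB0] using hT ⟨toLp 2 (0, y), B.domain.zero_mem, y.2⟩
  · refine mem_adjoint_domain_of_exists _
      ⟨(ofLp ((antidiag A B)† ⟨z, hz⟩)).1, fun x => ?_⟩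
    have hA0 : A ⟨0, A.domain.zero_mem⟩ = 0 := A.map_zero
    simpa [hA0] using hT ⟨toLp 2 (x, 0), x.2, A.domain.zero_mem⟩

end InnerProduct

end LinearPMap

/-- Let `A`, `B` be self-adjoint operators on a complex Hilbert space `H` with
`D(A) ∩ D(B) = {0}`.  Then the operator `T` on `H × H` with domain `D(B) × D(A)` given by
`T (x, y) = (A y, B x)` is densely defined and closed, and
`D(T ∘ T†) ∩ D(T† ∘ T) = {0}`; hence the self-commutator `T ∘ T† - T† ∘ T` has domain `{0}`. -/
theorem stmt_12 {H : Type} [NormedAddCommGroup H] [InnerProductSpace ℂ H] [CompleteSpace H]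
    (A B : H →ₗ.[ℂ] H) (hA_sa : A† = A) (hB_sa : B† = B)
    (hAB : A.domain ⊓ B.domain = ⊥)
    (T : HxH H →ₗ.[ℂ] HxH H)
    (hTdom : T.domain = (Submodule.prod B.domain A.domain).comap (prodE H).toLinearMap)
    (hT : ∀ x : T.domain, ∀ (hx : (prodE H (x : HxH H)).1 ∈ B.domain)
        (hy : (prodE H (x : HxH H)).2 ∈ A.domain),
      prodE H (T x) = (A ⟨(prodE H (x : HxH H)).2, hy⟩, B ⟨(prodE H (x : HxH H)).1, hx⟩)) :
    Dense (T.domain : Set (HxH H)) ∧ T.IsClosed ∧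
    (pComp T (T†)).domain ⊓ (pComp (T†) T).domain = ⊥ ∧
    (pComp T (T†) - pComp (T†) T).domain = ⊥ := by
  have hA : IsSelfAdjoint A := hA_sa
  have hB : IsSelfAdjoint B := hB_sa
  obtain rfl : T = antidiag A B := eq_antidiag hTdom hT
  have hadj : (antidiag A B)†.domain ≤ (antidiag B A).domain := by
    simpa only [hA_sa, hB_sa] using adjoint_antidiag_domain_le hA.dense_domain hB.dense_domain
  have hdom : (pComp (antidiag A B) (antidiag A B)†).domain ⊓
      (pComp (antidiag A B)† (antidiag A B)).domain = ⊥ := by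
    refine eq_bot_iff.2 <| le_trans ?_ (antidiag_domain_inf_eq_bot hAB).le
    rw [inf_comm]
    exact inf_le_inf (pComp_domain_le _ _) ((pComp_domain_le _ _).trans hadj)
  refine ⟨dense_antidiag_domain hA.dense_domain hB.dense_domain,
    antidiag_isClosed hA.isClosed hB.isClosed, hdom, ?_⟩
  rwa [sub_domain]
end
end

section
/- Let A be an unbounded positive self-adjoint operator on a complex Hilbert space H. On H × H define T with domain D(A) × H by T(x, y) = (0, Ax). Then T is densely defined and closed with adjoint T*(x, y) = (Ay, 0) on H × D(A); T* ∘ T has domain D(A∘A) × H with (T* ∘ T)(x, y) = ((A∘A)x, 0), and T ∘ T* has domain H × D(A∘A) with (T ∘ T*)(x, y) = (0, (A∘A)y); hence the self-commutator T ∘ T* − T* ∘ T, given on D(A∘A) × D(A∘A) by (x, y) ↦ (−(A∘A)x, (A∘A)y), is unbounded. Moreover, the operators P(x, y) = (Ax, 0) on D(A) × H and Q(x, y) = (0, Ay) on H × D(A) are positive self-adjoint with P ∘ P = T* ∘ T and Q ∘ Q = T ∘ T* (so P = |T| and Q = |T*|), and both P ∘ Q and Q ∘ P are zero operators on their respective dense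 domains, so P ∘ Q − Q ∘ P is bounded. -/
/- Unbounded (partially defined) operators on a complex Hilbert space are modelled by
Mathlib's `LinearPMap` (`H →ₗ.[ℂ] H`).  `T†` is the adjoint, `T.IsClosed` means the graph
of `T` is closed, and `f - g` is the difference with domain `D(f) ⊓ D(g)`. -/

noncomputable section

open LinearPMap

/-!
Viewed as `2 × 2` operator matrices, `T`, `P`, `Q` and `T†` each have a single nonzero entry `A`,
and adjoints and products of such single-entry operators are computed entry by entry; this gives
all the algebraic identities. The analytic input is that `D(A∘A)` is dense: since `A` is positive
and closed, `1 + A` is bounded below with closed range, and that range is dense because a vector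
orthogonal to it is an eigenvector of `A = A†` for the eigenvalue `-1`; hence `1 + A` maps
`D(A∘A)` onto `D(A)`, and a vector `(1 + A) s` orthogonal to `D(A∘A)` has `s ⊥ D(A)`. Then `A∘A` is unbounded along with `A`, because
`‖A x‖² ≤ ‖A (A x)‖ ‖x‖` on `D(A∘A)`, and a norm bound for a symmetric operator on a dense set
extends to its whole domain by duality.
-/

section Composition

variable {R E F G : Type*} [Ring R] [AddCommGroup E] [Module R E]
  [AddCommGroup F] [Module R F] [AddCommGroup G] [Module R G]

theorem mem_pComp_domain {S : F →ₗ.[R] G} {T : E →ₗ.[R] F} {x : E} :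
    x ∈ (pComp S T).domain ↔ ∃ h : x ∈ T.domain, T ⟨x, h⟩ ∈ S.domain :=
  ⟨fun ⟨y, hy, hyx⟩ => hyx ▸ ⟨y.2, hy⟩, fun ⟨h, h2⟩ => ⟨⟨x, h⟩, h2, rfl⟩⟩

theorem pComp_apply_s15 (S : F →ₗ.[R] G) (T : E →ₗ.[R] F) (x : (pComp S T).domain)
    (h1 : (x : E) ∈ T.domain) (h2 : T ⟨x, h1⟩ ∈ S.domain) :
    pComp S T x = S ⟨T ⟨x, h1⟩, h2⟩ := by
  have hx : (Submodule.equivMapOfInjective T.domain.subtype T.domain.injective_subtype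
      (S.domain.comap T.toFun)).symm x = ⟨⟨x, h1⟩, h2⟩ :=
    (LinearEquiv.symm_apply_eq _).mpr rfl
  exact congrArg (fun w : S.domain.comap T.toFun => S ⟨T w.1, w.2⟩) hx

end Composition

section Symmetric

variable {𝕜 E : Type*} [RCLike 𝕜] [NormedAddCommGroup E] [InnerProductSpace 𝕜 E]

open RCLike

theorem norm_le_of_dense_of_norm_inner_le {s : Set E} (hs : Dense s) {g : E} {M : ℝ}
    (hM : 0 ≤ M) (h : ∀ x ∈ s, ‖inner 𝕜 g x‖ ≤ M * ‖x‖) : ‖g‖ ≤ M := by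
  have hclosed : IsClosed {x : E | ‖inner 𝕜 g x‖ ≤ M * ‖x‖} :=
    isClosed_le (continuous_const.inner continuous_id).norm (continuous_const.mul continuous_norm)
  have hg : ‖inner 𝕜 g g‖ ≤ M * ‖g‖ := closure_minimal h hclosed (hs g)
  rw [inner_self_eq_norm_sq_to_K, norm_pow, norm_ofReal, abs_norm, sq] at hg
  rcases (norm_nonneg g).eq_or_lt with hg0 | hg0
  · rw [← hg0]; exact hM
  · exact le_of_mul_le_mul_right hg hg0

variable {A : E →ₗ.[𝕜] E}

theorem IsSelfAdjoint.isFormalAdjoint [CompleteSpace E] (hA : IsSelfAdjoint A) :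
    A.IsFormalAdjoint A := by
  simpa only [LinearPMap.isSelfAdjoint_def.mp hA] using
    LinearPMap.adjoint_isFormalAdjoint hA.dense_domain

theorem norm_apply_sq_le_of_isFormalAdjoint (hA : A.IsFormalAdjoint A) (x : A.domain)
    (hx : A x ∈ A.domain) : ‖A x‖ ^ 2 ≤ ‖A ⟨A x, hx⟩‖ * ‖(x : E)‖ :=
  calc ‖A x‖ ^ 2 = re (inner 𝕜 (A ⟨A x, hx⟩) (x : E)) := by
        rw [hA ⟨A x, hx⟩ x, inner_self_eq_norm_sq]
    _ ≤ ‖A ⟨A x, hx⟩‖ * ‖(x : E)‖ := (re_le_norm _).trans (norm_inner_le_norm _ _)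

theorem norm_apply_le_of_dense (hA : A.IsFormalAdjoint A) {c : ℝ} (hc : 0 ≤ c)
    (hD : Dense {x : E | ∃ h : x ∈ A.domain, ‖A ⟨x, h⟩‖ ≤ c * ‖x‖}) (y : A.domain) :
    ‖A y‖ ≤ c * ‖(y : E)‖ := by
  refine norm_le_of_dense_of_norm_inner_le (𝕜 := 𝕜) hD (by positivity) ?_
  rintro x ⟨hx, hbound⟩
  calc ‖inner 𝕜 (A y) x‖ = ‖inner 𝕜 (y : E) (A ⟨x, hx⟩)‖ := by rw [hA y ⟨x, hx⟩]
    _ ≤ ‖(y : E)‖ * (c * ‖x‖) := (norm_inner_le_norm _ _).trans (by gcongr)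
    _ = c * ‖(y : E)‖ * ‖x‖ := by ring

end Symmetric

section Positive

variable {E : Type*} [NormedAddCommGroup E] [InnerProductSpace ℂ E] {A : E →ₗ.[ℂ] E}

theorem norm_sq_add_norm_apply_sq_le (hpos : IsPosOp A) (x : A.domain) :
    ‖(x : E)‖ ^ 2 + ‖A x‖ ^ 2 ≤ ‖(x : E) + A x‖ ^ 2 := by
  have hre : 0 ≤ (inner ℂ (x : E) (A x)).re := by
    rw [← RCLike.re_to_complex, inner_re_symm]
    exact (hpos x).1
  rw [norm_add_sq (𝕜 := ℂ)]
  simp only [RCLike.re_to_complex]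
  linarith

variable [CompleteSpace E]

theorem eq_zero_of_forall_inner_add_apply_eq_zero (hA : IsSelfAdjoint A) (hpos : IsPosOp A)
    {z : E} (hz : ∀ x : A.domain, inner ℂ ((x : E) + A x) z = 0) : z = 0 := by
  have hz' : ∀ x : A.domain, inner ℂ (-z) (x : E) = inner ℂ z (A x) := fun x => by
    have hx := hz x
    rw [inner_add_left] at hx
    rw [inner_neg_left, ← inner_conj_symm z, ← inner_conj_symm z (A x),
      eq_neg_of_add_eq_zero_left hx, _root_.map_neg, neg_neg]
  have hzA : z ∈ (A†).domain := LinearPMap.mem_adjoint_domain_of_exists z ⟨-z, hz'⟩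
  have hAz : A† ⟨z, hzA⟩ = -z := LinearPMap.adjoint_apply_eq hA.dense_domain _ hz'
  have hpos' : IsPosOp (A†) := by rwa [LinearPMap.isSelfAdjoint_def.mp hA]
  have hnonneg := (hpos' ⟨z, hzA⟩).1
  rw [hAz, inner_neg_left, Complex.neg_re, ← RCLike.re_to_complex, inner_self_eq_norm_sq] at hnonneg
  exact norm_eq_zero.mp (by nlinarith [norm_nonneg z])

theorem exists_add_apply_eq (hA : IsSelfAdjoint A) (hpos : IsPosOp A) (y : E) :
    ∃ x : A.domain, (x : E) + A x = y := by
  -- `(x, A x) ↦ x + A x` is bounded below on the graph of `A`, which is complete as `A` is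
  -- closed, so its range is closed.
  let Φ : A.graph →L[ℂ] E :=
    (ContinuousLinearMap.fst ℂ E E + ContinuousLinearMap.snd ℂ E E).comp A.graph.subtypeL
  have : CompleteSpace A.graph := hA.isClosed.completeSpace_coe
  have hΦ : AntilipschitzWith 1 Φ := Φ.antilipschitz_of_bound fun ⟨⟨x₁, x₂⟩, hp⟩ => by
    obtain ⟨x, rfl, rfl⟩ := (A.mem_graph_iff).mp hp
    have hsq := norm_sq_add_norm_apply_sq_le hpos x
    change max ‖(x : E)‖ ‖A x‖ ≤ 1 * ‖(x : E) + A x‖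
    rw [one_mul]
    exact max_le (pow_le_pow_iff_left₀ (norm_nonneg _) (norm_nonneg _) two_ne_zero |>.mp
      (by linarith [sq_nonneg ‖A x‖]))
      (pow_le_pow_iff_left₀ (norm_nonneg _) (norm_nonneg _) two_ne_zero |>.mp
      (by linarith [sq_nonneg ‖(x : E)‖]))
  let M : Submodule ℂ E := LinearMap.range (Φ : A.graph →ₗ[ℂ] E)
  have hclosed : IsClosed (M : Set E) := by
    rw [LinearMap.coe_range]
    exact hΦ.isClosed_range Φ.uniformContinuous
  have hperp : Mᗮ = ⊥ := by
    refine (Submodule.eq_bot_iff _).mpr fun z hz => ?_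
    exact eq_zero_of_forall_inner_add_apply_eq_zero hA hpos fun x =>
      (Submodule.mem_orthogonal _ z).mp hz _ ⟨⟨_, A.mem_graph x⟩, rfl⟩
  have htop : M = ⊤ := by
    rw [← hclosed.submodule_topologicalClosure_eq, Submodule.topologicalClosure_eq_top_iff, hperp]
  obtain ⟨⟨⟨x₁, x₂⟩, hp⟩, rfl⟩ : y ∈ M := htop ▸ Submodule.mem_top
  obtain ⟨x, rfl, rfl⟩ := (A.mem_graph_iff).mp hp
  exact ⟨x, rfl⟩

theorem dense_pComp_self_domain (hA : IsSelfAdjoint A) (hpos : IsPosOp A) :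
    Dense ((pComp A A).domain : Set E) := by
  rw [Submodule.dense_iff_topologicalClosure_eq_top, Submodule.topologicalClosure_eq_top_iff,
    Submodule.eq_bot_iff]
  intro y hy
  obtain ⟨s, rfl⟩ := exists_add_apply_eq hA hpos y
  suffices hs : (s : E) = 0 by simp [show s = 0 from Subtype.ext hs]
  refine hA.dense_domain.eq_zero_of_inner_left ℂ fun v hv => ?_
  -- writing `v = r + A r` puts `r` in the domain of `A ∘ A`
  obtain ⟨r, hr⟩ := exists_add_apply_eq hA hpos v
  have hrA : A r ∈ A.domain := by
    rw [show A r = v - r by rw [← hr]; abel]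
    exact A.domain.sub_mem hv r.2
  have hr2 : (r : E) ∈ (pComp A A).domain := mem_pComp_domain.mpr ⟨r.2, hrA⟩
  calc inner ℂ (s : E) v = inner ℂ ((s : E) + A s) r := by
        rw [← hr, inner_add_right, inner_add_left, hA.isFormalAdjoint s r]
    _ = 0 := by rw [← inner_conj_symm, (Submodule.mem_orthogonal _ _).mp hy _ hr2, _root_.map_zero]

theorem isBddOp_of_isBddOp_pComp_self (hA : IsSelfAdjoint A) (hpos : IsPosOp A)
    (h : IsBddOp (pComp A A)) : IsBddOp A := by
  obtain ⟨C, hC, hbound⟩ := h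
  refine ⟨√C, Real.sqrt_nonneg C, norm_apply_le_of_dense hA.isFormalAdjoint (Real.sqrt_nonneg C)
    ((dense_pComp_self_domain hA hpos).mono ?_)⟩
  intro x hx
  obtain ⟨hx1, hx2⟩ := mem_pComp_domain.mp hx
  have hsq : ‖A ⟨x, hx1⟩‖ ^ 2 ≤ C * ‖x‖ ^ 2 :=
    calc ‖A ⟨x, hx1⟩‖ ^ 2 ≤ ‖A ⟨A ⟨x, hx1⟩, hx2⟩‖ * ‖x‖ :=
          norm_apply_sq_le_of_isFormalAdjoint hA.isFormalAdjoint _ hx2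
      _ ≤ C * ‖x‖ * ‖x‖ := by
          gcongr
          rw [← pComp_apply_s15 A A ⟨x, hx⟩]
          exact hbound _
      _ = C * ‖x‖ ^ 2 := by ring
  refine ⟨hx1, ?_⟩
  rw [← Real.sqrt_sq (norm_nonneg (A _)), ← Real.sqrt_sq (norm_nonneg x), ← Real.sqrt_mul hC]
  exact Real.sqrt_le_sqrt hsq

end Positive

section Entry

variable {H : Type} [NormedAddCommGroup H] [InnerProductSpace ℂ H]

/-- The coordinate projections of `H × H`; `true` stands for the first coordinate. -/
def coord (i : Bool) : HxH H →ₗ[ℂ] H := cond i (WithLp.fstₗ 2 ℂ H H) (WithLp.sndₗ 2 ℂ H H)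

def ins (i : Bool) : H →ₗ[ℂ] HxH H :=
  (prodE H).symm.toLinearMap ∘ₗ cond i (LinearMap.inl ℂ H H) (LinearMap.inr ℂ H H)

@[simp] theorem coord_ins (i : Bool) (a : H) : coord i (ins i a) = a := by cases i <;> rfl

theorem coord_ins_of_ne {i l : Bool} (h : i ≠ l) (a : H) : coord l (ins i a) = 0 := by
  cases i <;> cases l <;> first | rfl | exact absurd rfl h

theorem inner_ins_left (i : Bool) (a : H) (z : HxH H) :
    inner ℂ (ins i a) z = inner ℂ a (coord i z) := by
  cases i <;> simp [ins, coord]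

theorem inner_ins_right (i : Bool) (a : H) (z : HxH H) :
    inner ℂ z (ins i a) = inner ℂ (coord i z) a := by
  cases i <;> simp [ins, coord]

@[simp] theorem norm_ins (i : Bool) (a : H) : ‖ins i a‖ = ‖a‖ := by
  cases i
  · exact WithLp.norm_toLp_snd 2 H H a
  · exact WithLp.norm_toLp_fst 2 H H a

/-- The operator on `H × H` whose matrix has `A` in row `j`, column `i` and zeros elsewhere. -/
def entryOp (A : H →ₗ.[ℂ] H) (i j : Bool) : HxH H →ₗ.[ℂ] HxH H where
  domain := (cond i (A.domain.prod ⊤) (Submodule.prod ⊤ A.domain)).comap (prodE H).toLinearMap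
  toFun := ins j ∘ₗ A.toFun ∘ₗ (coord i).restrict fun z hz => by
    cases i <;> simp_all [coord, Submodule.mem_prod]

variable {A B : H →ₗ.[ℂ] H} {i j k : Bool}

theorem mem_entryOp_domain {z : HxH H} : z ∈ (entryOp A i j).domain ↔ coord i z ∈ A.domain := by
  cases i <;> simp [entryOp, coord, Submodule.mem_prod]

theorem entryOp_apply (z : (entryOp A i j).domain) :
    entryOp A i j z = ins j (A ⟨coord i z, mem_entryOp_domain.mp z.2⟩) := rfl

theorem entryOp_apply_of_coord_eq_zero (z : (entryOp A i j).domain)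
    (hz : coord i (z : HxH H) = 0) : entryOp A i j z = 0 := by
  rw [entryOp_apply, show (⟨coord i z, _⟩ : A.domain) = 0 from Subtype.ext hz,
    LinearPMap.map_zero, _root_.map_zero]

theorem eq_entryOp {W : HxH H →ₗ.[ℂ] HxH H} (hdom : W.domain = (entryOp A i j).domain)
    (hW : ∀ (z : W.domain) (h : coord i z ∈ A.domain), W z = ins j (A ⟨coord i z, h⟩)) :
    W = entryOp A i j :=
  LinearPMap.ext hdom fun z hz _ => hW ⟨z, hz⟩ (mem_entryOp_domain.mp (hdom ▸ hz))

theorem dense_entryOp_domain (hA : Dense (A.domain : Set H)) :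
    Dense ((entryOp A i j).domain : Set (HxH H)) := by
  have hprod :
      Dense ((cond i (A.domain.prod ⊤) (Submodule.prod ⊤ A.domain) : Submodule ℂ (H × H)) :
        Set (H × H)) := by
    cases i
    · simpa [Submodule.prod_coe] using dense_univ.prod hA
    · simpa [Submodule.prod_coe] using hA.prod dense_univ
  exact hprod.preimage (WithLp.prodContinuousLinearEquiv 2 ℂ H H).toHomeomorph.isOpenMap

theorem isPosOp_entryOp (hA : IsPosOp A) : IsPosOp (entryOp A i i) := fun z => by
  rw [entryOp_apply, inner_ins_left]
  exact hA _

theorem pComp_entryOp :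
    pComp (entryOp B k j) (entryOp A i k) = entryOp (pComp B A) i j := by
  have hdom : ∀ z : HxH H, z ∈ (pComp (entryOp B k j) (entryOp A i k)).domain ↔
      z ∈ (entryOp (pComp B A) i j).domain := fun z => by
    simp only [mem_pComp_domain, mem_entryOp_domain, entryOp_apply, coord_ins]
  refine LinearPMap.ext (Submodule.ext hdom) fun z hz hz' => ?_
  obtain ⟨h1, h2⟩ := mem_pComp_domain.mp hz
  obtain ⟨h1', h2'⟩ := mem_pComp_domain.mp (mem_entryOp_domain.mp hz')
  rw [pComp_apply_s15 _ _ ⟨z, hz⟩ h1 h2, entryOp_apply (A := pComp B A), pComp_apply_s15 _ _ _ h1' h2']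
  exact congrArg (fun b => ins j (B b)) (Subtype.ext (coord_ins k _))

theorem pComp_entryOp_domain_of_ne {l : Bool} (hkl : k ≠ l) :
    (pComp (entryOp B l j) (entryOp A i k)).domain = (entryOp A i k).domain :=
  Submodule.ext fun z => ⟨fun hz => (mem_pComp_domain.mp hz).1, fun hz => mem_pComp_domain.mpr
    ⟨hz, mem_entryOp_domain.mpr (by simp [entryOp_apply, coord_ins_of_ne hkl])⟩⟩

theorem pComp_entryOp_apply_of_ne {l : Bool} (hkl : k ≠ l)
    (z : (pComp (entryOp B l j) (entryOp A i k)).domain) :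
    pComp (entryOp B l j) (entryOp A i k) z = 0 := by
  obtain ⟨h1, h2⟩ := mem_pComp_domain.mp z.2
  rw [pComp_apply_s15 _ _ z h1 h2, entryOp_apply_of_coord_eq_zero]
  simp [entryOp_apply, coord_ins_of_ne hkl]

theorem entryOp_sub_entryOp_domain :
    (entryOp B false false - entryOp B true true).domain =
      (B.domain.prod B.domain).comap (prodE H).toLinearMap := by
  ext z
  simp [LinearPMap.sub_domain, mem_entryOp_domain, coord, Submodule.mem_prod, and_comm]

theorem prodE_entryOp_sub_entryOp_apply (z : (entryOp B false false - entryOp B true true).domain)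
    (h1 : (prodE H z).1 ∈ B.domain) (h2 : (prodE H z).2 ∈ B.domain) :
    prodE H ((entryOp B false false - entryOp B true true) z) = (-B ⟨_, h1⟩, B ⟨_, h2⟩) := by
  simp [LinearPMap.sub_apply, entryOp_apply, ins, coord]

theorem isBddOp_of_isBddOp_entryOp_sub {l : Bool} (hil : i ≠ l)
    (h : IsBddOp (entryOp B l l - entryOp B i i)) : IsBddOp B := by
  obtain ⟨C, hC, hbound⟩ := h
  refine ⟨C, hC, fun x => ?_⟩
  have hz : ins i (x : H) ∈ (entryOp B l l - entryOp B i i).domain :=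
    ⟨mem_entryOp_domain.mpr (by simp [coord_ins_of_ne hil]), mem_entryOp_domain.mpr (by simp)⟩
  simpa [LinearPMap.sub_apply, entryOp_apply_of_coord_eq_zero, entryOp_apply,
    coord_ins_of_ne hil] using hbound ⟨_, hz⟩

variable [CompleteSpace H]

theorem adjoint_entryOp (hA : Dense (A.domain : Set H)) :
    (entryOp A i j)† = entryOp (A†) j i := by
  have hdense := dense_entryOp_domain (i := i) (j := j) hA
  have key : ∀ (y : HxH H) (hy : coord j y ∈ (A†).domain) (z : (entryOp A i j).domain),
      inner ℂ (ins i (A† ⟨coord j y, hy⟩)) (z : HxH H) = inner ℂ y (entryOp A i j z) := by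
    intro y hy z
    rw [inner_ins_left, entryOp_apply, inner_ins_right]
    exact LinearPMap.adjoint_isFormalAdjoint hA ⟨_, hy⟩ ⟨_, _⟩
  refine LinearPMap.ext (Submodule.ext fun y => ⟨fun hy => ?_, fun hy => ?_⟩) fun y hy hy' => ?_
  · refine mem_entryOp_domain.mpr (LinearPMap.mem_adjoint_domain_of_exists _
      ⟨coord i ((entryOp A i j)† ⟨y, hy⟩), fun b => ?_⟩)
    have hb : ins i (b : H) ∈ (entryOp A i j).domain := mem_entryOp_domain.mpr (by simp)
    have := LinearPMap.adjoint_isFormalAdjoint hdense ⟨y, hy⟩ ⟨_, hb⟩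
    rw [inner_ins_right, entryOp_apply, inner_ins_right] at this
    simpa using this
  · exact LinearPMap.mem_adjoint_domain_of_exists _ ⟨_, key y (mem_entryOp_domain.mp hy)⟩
  · exact LinearPMap.adjoint_apply_eq hdense _ (key y (mem_entryOp_domain.mp hy'))

end Entry

/-- Let `A` be an unbounded positive self-adjoint operator on a complex Hilbert space `H`.
On `H × H` define `T` with domain `D(A) × H` by `T (x, y) = (0, A x)`.  Then `T` is densely
defined and closed with adjoint `T† (x, y) = (A y, 0)` on `H × D(A)`; `T† ∘ T` has domain
`D(A∘A) × H` with `(T† ∘ T) (x, y) = ((A∘A) x, 0)` and `T ∘ T†` has domain `H × D(A∘A)` with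
`(T ∘ T†) (x, y) = (0, (A∘A) y)`; hence the self-commutator `T ∘ T† - T† ∘ T`, given on
`D(A∘A) × D(A∘A)` by `(x, y) ↦ (-(A∘A) x, (A∘A) y)`, is unbounded.  Moreover, the operators
`P (x, y) = (A x, 0)` on `D(A) × H` and `Q (x, y) = (0, A y)` on `H × D(A)` are positive
self-adjoint with `P ∘ P = T† ∘ T` and `Q ∘ Q = T ∘ T†` (so `P = |T|` and `Q = |T†|`), and
both `P ∘ Q` and `Q ∘ P` are zero on their dense domains, so `P ∘ Q - Q ∘ P` is bounded. -/
theorem stmt_15 {H : Type} [NormedAddCommGroup H] [InnerProductSpace ℂ H] [CompleteSpace H]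
    (A : H →ₗ.[ℂ] H) (hA_sa : A† = A) (hA_pos : IsPosOp A) (hA_unb : ¬ IsBddOp A)
    (T P Q : HxH H →ₗ.[ℂ] HxH H)
    (hTdom : T.domain = (Submodule.prod A.domain ⊤).comap (prodE H).toLinearMap)
    (hT : ∀ x : T.domain, ∀ h1 : (prodE H (x : HxH H)).1 ∈ A.domain,
      prodE H (T x) = (0, A ⟨(prodE H (x : HxH H)).1, h1⟩))
    (hPdom : P.domain = (Submodule.prod A.domain ⊤).comap (prodE H).toLinearMap)
    (hP : ∀ x : P.domain, ∀ h1 : (prodE H (x : HxH H)).1 ∈ A.domain,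
      prodE H (P x) = (A ⟨(prodE H (x : HxH H)).1, h1⟩, 0))
    (hQdom : Q.domain = (Submodule.prod ⊤ A.domain).comap (prodE H).toLinearMap)
    (hQ : ∀ x : Q.domain, ∀ h2 : (prodE H (x : HxH H)).2 ∈ A.domain,
      prodE H (Q x) = (0, A ⟨(prodE H (x : HxH H)).2, h2⟩)) :
    -- `T` is densely defined and closed:
    Dense (T.domain : Set (HxH H)) ∧ T.IsClosed ∧
    -- `T†` has domain `H × D(A)` and acts by `(x, y) ↦ (A y, 0)`:
    (T†).domain = (Submodule.prod ⊤ A.domain).comap (prodE H).toLinearMap ∧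
    (∀ y : (T†).domain, ∀ h2 : (prodE H (y : HxH H)).2 ∈ A.domain,
      prodE H (T† y) = (A ⟨(prodE H (y : HxH H)).2, h2⟩, 0)) ∧
    -- `T† ∘ T` has domain `D(A∘A) × H` and acts by `(x, y) ↦ ((A∘A) x, 0)`:
    (pComp (T†) T).domain =
      (Submodule.prod (pComp A A).domain ⊤).comap (prodE H).toLinearMap ∧
    (∀ z : (pComp (T†) T).domain, ∀ h1 : (prodE H (z : HxH H)).1 ∈ (pComp A A).domain,
      prodE H (pComp (T†) T z) = (pComp A A ⟨(prodE H (z : HxH H)).1, h1⟩, 0)) ∧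
    -- `T ∘ T†` has domain `H × D(A∘A)` and acts by `(x, y) ↦ (0, (A∘A) y)`:
    (pComp T (T†)).domain =
      (Submodule.prod ⊤ (pComp A A).domain).comap (prodE H).toLinearMap ∧
    (∀ z : (pComp T (T†)).domain, ∀ h2 : (prodE H (z : HxH H)).2 ∈ (pComp A A).domain,
      prodE H (pComp T (T†) z) = (0, pComp A A ⟨(prodE H (z : HxH H)).2, h2⟩)) ∧
    -- the self-commutator acts on `D(A∘A) × D(A∘A)` by `(x, y) ↦ (-(A∘A) x, (A∘A) y)` and is
    -- unbounded:
    (pComp T (T†) - pComp (T†) T).domain =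
      (Submodule.prod (pComp A A).domain (pComp A A).domain).comap (prodE H).toLinearMap ∧
    (∀ z : (pComp T (T†) - pComp (T†) T).domain,
      ∀ (h1 : (prodE H (z : HxH H)).1 ∈ (pComp A A).domain)
        (h2 : (prodE H (z : HxH H)).2 ∈ (pComp A A).domain),
      prodE H ((pComp T (T†) - pComp (T†) T) z) =
        (-(pComp A A ⟨(prodE H (z : HxH H)).1, h1⟩), pComp A A ⟨(prodE H (z : HxH H)).2, h2⟩)) ∧
    ¬ IsBddOp (pComp T (T†) - pComp (T†) T) ∧
    -- `P = |T|` and `Q = |T†|`: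
    IsPosOp P ∧ P† = P ∧ IsPosOp Q ∧ Q† = Q ∧
    pComp P P = pComp (T†) T ∧ pComp Q Q = pComp T (T†) ∧
    -- `P ∘ Q` and `Q ∘ P` are zero on their dense domains, so `P ∘ Q - Q ∘ P` is bounded:
    Dense ((pComp P Q).domain : Set (HxH H)) ∧ (∀ z : (pComp P Q).domain, pComp P Q z = 0) ∧
    Dense ((pComp Q P).domain : Set (HxH H)) ∧ (∀ z : (pComp Q P).domain, pComp Q P z = 0) ∧
    IsBddOp (pComp P Q - pComp Q P) := by
  have hA : IsSelfAdjoint A := hA_sa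
  have hdense := hA.dense_domain
  obtain rfl : T = entryOp A true false :=
    eq_entryOp hTdom fun x h => (prodE H).injective (hT x h)
  obtain rfl : P = entryOp A true true :=
    eq_entryOp hPdom fun x h => (prodE H).injective (hP x h)
  obtain rfl : Q = entryOp A false false :=
    eq_entryOp hQdom fun x h => (prodE H).injective (hQ x h)
  have hadj : ∀ i j, (entryOp A i j)† = entryOp A j i := fun i j => by
    rw [adjoint_entryOp hdense, hA_sa]
  rw [hadj, pComp_entryOp, pComp_entryOp, pComp_entryOp, pComp_entryOp]
  have hne : false ≠ true := Bool.false_ne_true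
  refine ⟨dense_entryOp_domain hdense,
    hadj false true ▸ LinearPMap.adjoint_isClosed (dense_entryOp_domain hdense),
    rfl, fun _ _ => rfl, rfl, fun _ _ => rfl, rfl, fun _ _ => rfl,
    entryOp_sub_entryOp_domain, prodE_entryOp_sub_entryOp_apply,
    fun h => hA_unb (isBddOp_of_isBddOp_pComp_self hA hA_pos
      (isBddOp_of_isBddOp_entryOp_sub hne.symm h)),
    isPosOp_entryOp hA_pos, hadj true true, isPosOp_entryOp hA_pos, hadj false false, rfl, rfl,
    ?_, pComp_entryOp_apply_of_ne hne, ?_, pComp_entryOp_apply_of_ne hne.symm, ?_⟩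
  · rw [pComp_entryOp_domain_of_ne hne]
    exact dense_entryOp_domain hdense
  · rw [pComp_entryOp_domain_of_ne hne.symm]
    exact dense_entryOp_domain hdense
  · refine ⟨0, le_rfl, fun z => ?_⟩
    simp [LinearPMap.sub_apply, pComp_entryOp_apply_of_ne hne, pComp_entryOp_apply_of_ne hne.symm]
end
end
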